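/- Let (Ω, μ) be a probability space on a standard Borel space, Y₀, Y₁ : Ω → ℝ bounded measurable random variables, and D, T : Ω → {0,1} measurable. Assume the pair (Y₀, Y₁) is conditionally independent of D given the σ-algebra generated by T. Let Y := Y₁·1{D = 1} + Y₀·1{D = 0}. Fix t ∈ {0,1} with μ(T = t) > 0, and let p(t) := μ(D = 1, T = t)/μ(T = t) with 0 < p(t) < 1. Then E[ Y·1{D = 1, T = t}/p(t) − Y·1{D = 0, T = t}/(1 − p(t)) ] = E[(Y₁ − Y₀)·1{T = t}]. -/

import Mathlib

open MeasureTheory ProbabilityTheory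

/-! Since `T` is finitely valued, conditioning on `σ(T)` is conditioning on its atoms: on the atom
`{T = t}` the conditional expectation of an indicator is the elementary conditional probability, so
conditional independence given `T` becomes plain independence of `(Y₀, Y₁)` and `D` under
`μ[|T ← t]`. There `E[Y₁ 1{D = 1}] = p E[Y₁]` and `E[Y₀ 1{D = 0}] = (1 - p) E[Y₀]`, and integrating
against `1{T = t}` under `μ` is `μ(T = t)` times integrating under `μ[|T ← t]`. -/

namespace ProbabilityTheory

variable {Ω β : Type*} {mΩ : MeasurableSpace Ω} {μ : Measure Ω} {T : Ω → β} {t : β}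

lemma cond_real_apply {s : Set Ω} (hs : MeasurableSet s) (E : Set Ω) :
    μ[|s].real E = (μ.real s)⁻¹ * μ.real (s ∩ E) := by
  rw [measureReal_def, cond_apply hs, ENNReal.toReal_mul, ENNReal.toReal_inv, measureReal_def,
    measureReal_def]

lemma condExp_comap_top_apply_eq_cond [IsFiniteMeasure μ] (hm : MeasurableSpace.comap T ⊤ ≤ mΩ)
    (hμt : μ (T ⁻¹' {t}) ≠ 0) {E : Set Ω} (hE : MeasurableSet E) {ω : Ω} (hω : T ω = t) :
    (μ⟦E | MeasurableSpace.comap T ⊤⟧) ω = μ[|T ← t].real E := by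
  set S := T ⁻¹' {t}
  have hSm : MeasurableSet[MeasurableSpace.comap T ⊤] S := ⟨{t}, trivial, rfl⟩
  have hconst : ∀ x ∈ S,
      (μ⟦E | MeasurableSpace.comap T ⊤⟧) x = (μ⟦E | MeasurableSpace.comap T ⊤⟧) ω :=
    fun x hx => (stronglyMeasurable_condExp.factorsThrough (mY := ⊤)) (hx.trans hω.symm)
  have hE1 : Integrable (E.indicator fun _ => (1 : ℝ)) μ := (integrable_const 1).indicator hE
  have hint := setIntegral_condExp hm hE1 hSm
  rw [setIntegral_congr_fun (hm _ hSm) hconst, setIntegral_const, setIntegral_indicator hE,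
    setIntegral_const, smul_eq_mul, smul_eq_mul, mul_one] at hint
  rw [cond_real_apply (hm _ hSm), ← hint,
    inv_mul_cancel_left₀ ((measureReal_ne_zero_iff (measure_ne_top μ S)).mpr hμt)]

theorem CondIndepFun.indepFun_cond_fiber {γ δ : Type*} [MeasurableSpace γ] [MeasurableSpace δ]
    [StandardBorelSpace Ω] [IsFiniteMeasure μ] {hm : MeasurableSpace.comap T ⊤ ≤ mΩ}
    {X : Ω → γ} {D : Ω → δ} (hX : Measurable X) (hD : Measurable D)
    (hXD : CondIndepFun (MeasurableSpace.comap T ⊤) hm X D μ) (hμt : μ (T ⁻¹' {t}) ≠ 0) :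
    IndepFun X D μ[|T ← t] := by
  have := cond_isProbabilityMeasure (μ := μ) hμt
  rw [indepFun_iff_measure_inter_preimage_eq_mul]
  intro s u hs hu
  have hmul := (condIndepFun_iff_condExp_inter_preimage_eq_mul hX hD).mp hXD s u hs hu
  -- The identity holds a.e. and the atom has positive measure, so it holds at a point of the atom.
  obtain ⟨ω, hω, hmulω⟩ : ∃ ω ∈ T ⁻¹' {t}, (μ⟦X ⁻¹' s ∩ D ⁻¹' u | MeasurableSpace.comap T ⊤⟧) ω
      = (μ⟦X ⁻¹' s | MeasurableSpace.comap T ⊤⟧) ω *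
        (μ⟦D ⁻¹' u | MeasurableSpace.comap T ⊤⟧) ω := by
    by_contra! h
    exact hμt (measure_mono_null h (ae_iff.mp hmul))
  rw [condExp_comap_top_apply_eq_cond hm hμt ((hX hs).inter (hD hu)) hω,
    condExp_comap_top_apply_eq_cond hm hμt (hX hs) hω,
    condExp_comap_top_apply_eq_cond hm hμt (hD hu) hω, measureReal_def, measureReal_def,
    measureReal_def, ← ENNReal.toReal_mul] at hmulω
  exact (ENNReal.toReal_eq_toReal_iff' (measure_ne_top _ _)
    (ENNReal.mul_ne_top (measure_ne_top _ _) (measure_ne_top _ _))).mp hmulω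

lemma integral_mul_ite_eq_measureReal_mul_integral_cond [IsFiniteMeasure μ] [DecidableEq β]
    (hS : MeasurableSet (T ⁻¹' {t})) (f : Ω → ℝ) :
    ∫ ω, f ω * (if T ω = t then 1 else 0) ∂μ = μ.real (T ⁻¹' {t}) * ∫ ω, f ω ∂μ[|T ← t] := by
  have hset : ∫ ω, f ω * (if T ω = t then 1 else 0) ∂μ = ∫ ω in T ⁻¹' {t}, f ω ∂μ := by
    rw [← integral_indicator hS]
    congr 1 with ω
    by_cases h : T ω = t <;> simp [h]
  rw [hset, cond, integral_smul_measure, smul_eq_mul, ← mul_assoc, ENNReal.toReal_inv]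
  by_cases h0 : μ (T ⁻¹' {t}) = 0
  · simp [Measure.restrict_eq_zero.mpr h0]
  · rw [measureReal_def, mul_inv_cancel₀ (ENNReal.toReal_ne_zero.mpr ⟨h0, measure_ne_top _ _⟩),
      one_mul]

lemma IndepFun.integral_mul_ite_eq {Y : Ω → ℝ} {D : Ω → β} [MeasurableSpace β]
    [MeasurableSingletonClass β] [DecidableEq β] [IsFiniteMeasure μ] (hYD : IndepFun Y D μ)
    (hY : AEStronglyMeasurable Y μ) (hD : Measurable D) (d : β) :
    ∫ ω, Y ω * (if D ω = d then 1 else 0) ∂μ = (∫ ω, Y ω ∂μ) * μ.real (D ⁻¹' {d}) := by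
  have hg : Measurable fun x : β => if x = d then (1 : ℝ) else 0 :=
    Measurable.ite (measurableSet_singleton d) measurable_const measurable_const
  have hind : IndepFun Y (fun ω => if D ω = d then (1 : ℝ) else 0) μ := hYD.comp measurable_id hg
  rw [hind.integral_fun_mul_eq_mul_integral hY (hg.comp hD).aestronglyMeasurable,
    ← integral_indicator_one (hD (measurableSet_singleton d))]
  congr 2 with ω
  by_cases h : D ω = d <;> simp [h]

lemma integral_ipw_eq_integral_sub {Y0 Y1 : Ω → ℝ} {D : Ω → β} [MeasurableSpace β]
    [MeasurableSingletonClass β] [DecidableEq β] [IsFiniteMeasure μ] (hY0 : Integrable Y0 μ)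
    (hY1 : Integrable Y1 μ) (hD : Measurable D) (hY0D : IndepFun Y0 D μ) (hY1D : IndepFun Y1 D μ)
    {a b : β} (ha : μ.real (D ⁻¹' {a}) ≠ 0) (hb : μ.real (D ⁻¹' {b}) ≠ 0) :
    ∫ ω, (Y1 ω * (if D ω = a then 1 else 0) / μ.real (D ⁻¹' {a})
        - Y0 ω * (if D ω = b then 1 else 0) / μ.real (D ⁻¹' {b})) ∂μ
      = ∫ ω, (Y1 ω - Y0 ω) ∂μ := by
  have hmul_ite : ∀ {f : Ω → ℝ}, Integrable f μ → ∀ d : β,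
      Integrable (fun ω => f ω * if D ω = d then 1 else 0) μ := fun hf d =>
    hf.mul_bdd (c := 1) (Measurable.ite (hD (measurableSet_singleton d)) measurable_const
      measurable_const).aestronglyMeasurable (ae_of_all _ fun ω => by split_ifs <;> simp)
  rw [integral_sub ((hmul_ite hY1 a).div_const _) ((hmul_ite hY0 b).div_const _), integral_div,
    integral_div, hY1D.integral_mul_ite_eq hY1.1 hD a, hY0D.integral_mul_ite_eq hY0.1 hD b,
    mul_div_cancel_right₀ _ ha, mul_div_cancel_right₀ _ hb, integral_sub hY1 hY0]

end ProbabilityTheory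

theorem stmt_13_general {Ω : Type*} [MeasurableSpace Ω] [StandardBorelSpace Ω]
    (μ : Measure Ω) [IsProbabilityMeasure μ]
    (Y0 Y1 : Ω → ℝ) (hY0m : Measurable Y0) (hY1m : Measurable Y1)
    (M : ℝ) (hY0b : ∀ ω, |Y0 ω| ≤ M) (hY1b : ∀ ω, |Y1 ω| ≤ M)
    (D T : Ω → Fin 2) (hD : Measurable D) (hT : Measurable T)
    (hCI : CondIndepFun (MeasurableSpace.comap T ⊤) hT.comap_le
      (fun ω => (Y0 ω, Y1 ω)) D μ)
    (Y : Ω → ℝ)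
    (hY : ∀ ω, Y ω = Y1 ω * (if D ω = 1 then 1 else 0) + Y0 ω * (if D ω = 0 then 1 else 0))
    (t : Fin 2) (ht : 0 < μ {ω | T ω = t})
    (p : ℝ)
    (hp : p = (μ {ω | D ω = 1 ∧ T ω = t}).toReal / (μ {ω | T ω = t}).toReal)
    (hp0 : 0 < p) (hp1 : p < 1) :
    ∫ ω, (Y ω * (if D ω = 1 ∧ T ω = t then 1 else 0) / p
        - Y ω * (if D ω = 0 ∧ T ω = t then 1 else 0) / (1 - p)) ∂μ
      = ∫ ω, (Y1 ω - Y0 ω) * (if T ω = t then 1 else 0) ∂μ := by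
  set ν := μ[|T ← t]
  have hS : MeasurableSet (T ⁻¹' {t}) := hT (measurableSet_singleton t)
  have : IsProbabilityMeasure ν := cond_isProbabilityMeasure ht.ne'
  have hind : IndepFun (fun ω => (Y0 ω, Y1 ω)) D ν :=
    hCI.indepFun_cond_fiber (hY0m.prodMk hY1m) hD ht.ne'
  have hp_cond : ν.real (D ⁻¹' {1}) = p := by
    rw [hp, cond_real_apply hS, inv_mul_eq_div, measureReal_def, measureReal_def]
    congr 3 with ω
    exact and_comm
  have hq_cond : ν.real (D ⁻¹' {0}) = 1 - p := by
    have hcompl : D ⁻¹' {0} = (D ⁻¹' {1})ᶜ := by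
      ext ω
      simp only [Set.mem_preimage, Set.mem_singleton_iff, Set.mem_compl_iff]
      omega
    rw [hcompl, probReal_compl_eq_one_sub (hD (measurableSet_singleton 1)), hp_cond]
  have hpt : ∀ ω, Y ω * (if D ω = 1 ∧ T ω = t then 1 else 0) / p
        - Y ω * (if D ω = 0 ∧ T ω = t then 1 else 0) / (1 - p)
      = (Y1 ω * (if D ω = 1 then 1 else 0) / p - Y0 ω * (if D ω = 0 then 1 else 0) / (1 - p))
        * (if T ω = t then 1 else 0) := by
    intro ω
    rw [hY]
    split_ifs <;> simp_all
  simp only [hpt, integral_mul_ite_eq_measureReal_mul_integral_cond hS]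
  rw [← hq_cond, ← hp_cond, integral_ipw_eq_integral_sub
    (.of_bound hY0m.aestronglyMeasurable M (ae_of_all _ hY0b))
    (.of_bound hY1m.aestronglyMeasurable M (ae_of_all _ hY1b)) hD
    (hind.comp measurable_fst measurable_id) (hind.comp measurable_snd measurable_id)
    (hp_cond ▸ hp0.ne') (hq_cond ▸ (sub_pos.mpr hp1).ne')]

/-- In a strictly strategy-proof RCT, the inverse-propensity-weighted
estimand is unbiased for `β_t = E[(Y₁-Y₀) 1{T=t}]`:
`E[ Y 1{D=1,T=t}/p(t) - Y 1{D=0,T=t}/(1-p(t)) ] = E[(Y₁-Y₀) 1{T=t}]`,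
where `p(t) = P(D=1, T=t)/P(T=t)`. -/
theorem stmt_13 {Ω : Type*} [MeasurableSpace Ω] [StandardBorelSpace Ω] [Nonempty Ω]
    (μ : Measure Ω) [IsProbabilityMeasure μ]
    (Y0 Y1 : Ω → ℝ) (hY0m : Measurable Y0) (hY1m : Measurable Y1)
    (M : ℝ) (hY0b : ∀ ω, |Y0 ω| ≤ M) (hY1b : ∀ ω, |Y1 ω| ≤ M)
    (D T : Ω → Fin 2) (hD : Measurable D) (hT : Measurable T)
    (hCI : CondIndepFun (MeasurableSpace.comap T ⊤) hT.comap_le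
      (fun ω => (Y0 ω, Y1 ω)) D μ)
    (Y : Ω → ℝ)
    (hY : ∀ ω, Y ω = Y1 ω * (if D ω = 1 then 1 else 0) + Y0 ω * (if D ω = 0 then 1 else 0))
    (t : Fin 2) (ht : 0 < μ {ω | T ω = t})
    (p : ℝ)
    (hp : p = (μ {ω | D ω = 1 ∧ T ω = t}).toReal / (μ {ω | T ω = t}).toReal)
    (hp0 : 0 < p) (hp1 : p < 1) :
    ∫ ω, (Y ω * (if D ω = 1 ∧ T ω = t then 1 else 0) / p
        - Y ω * (if D ω = 0 ∧ T ω = t then 1 else 0) / (1 - p)) ∂μ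
      = ∫ ω, (Y1 ω - Y0 ω) * (if T ω = t then 1 else 0) ∂μ :=
  stmt_13_general μ Y0 Y1 hY0m hY1m M hY0b hY1b D T hD hT hCI Y hY t ht p hp hp0 hp1
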